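/- arXiv:1410.7033 — 4 statements merged into one kernel-verified Lean document; each statement's English description precedes it below -/
import Mathlib

section
/- Let μ be a finite positive Borel measure on the unit sphere S^{n-1} ⊂ ℝⁿ (n ≥ 2) with the property that for every s > 0, ∫_{S^{n-1}} (s²x₁² + s⁻²x₂² + x₃² + ⋯ + x_n²)^{1/2} dμ(x) = μ(S^{n-1}). Then μ is supported on {x : x₁ = 0}. -/
/-!
The integrand dominates `s * |x₀|` pointwise, so `s * ∫ |x₀| dμ ≤ μ(univ)` for every `s > 0`.
Letting `s → ∞` forces `∫ |x₀| dμ = 0`, i.e. `x₀ = 0` almost everywhere.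
-/

open MeasureTheory

lemma nonpos_of_forall_pos_mul_le {a C : ℝ} (h : ∀ s > 0, s * a ≤ C) : a ≤ 0 := by
  by_contra! ha
  have hC : 0 ≤ C := (mul_nonneg zero_le_one ha.le).trans (h 1 one_pos)
  have := h ((C + 1) / a) (by positivity)
  rw [div_mul_cancel₀ _ ha.ne'] at this
  linarith

lemma ae_eq_zero_of_forall_pos_mul_le {α : Type*} [MeasurableSpace α]
    {μ : Measure α} {f : α → ℝ} {g : ℝ → α → ℝ} {C : ℝ} (hf : AEStronglyMeasurable f μ)
    (hf0 : 0 ≤ f) (hg : ∀ s > 0, Integrable (g s) μ) (hfg : ∀ s > 0, ∀ x, s * f x ≤ g s x)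
    (hC : ∀ s > 0, ∫ x, g s x ∂μ ≤ C) : f =ᵐ[μ] 0 := by
  have hfint : Integrable f μ :=
    (hg 1 one_pos).mono' hf <| .of_forall fun x => by
      simpa [abs_of_nonneg (hf0 x)] using hfg 1 one_pos x
  refine (integral_eq_zero_iff_of_nonneg hf0 hfint).mp <|
    le_antisymm (nonpos_of_forall_pos_mul_le (C := C) fun s hs => ?_) (integral_nonneg hf0)
  calc s * ∫ x, f x ∂μ = ∫ x, s * f x ∂μ := (integral_const_mul s _).symm
    _ ≤ ∫ x, g s x ∂μ := integral_mono (hfint.const_mul s) (hg s hs) (hfg s hs)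
    _ ≤ C := hC s hs

theorem stmt_8_general (m : ℕ) (μ : Measure (EuclideanSpace ℝ (Fin (m + 2))))
    [IsFiniteMeasure μ]
    (hint : ∀ s : ℝ, 0 < s →
      ∫ x, Real.sqrt (s ^ 2 * (x 0) ^ 2 + (s ^ 2)⁻¹ * (x 1) ^ 2 +
        ∑ i ∈ Finset.univ.filter (fun i : Fin (m + 2) => 2 ≤ (i : ℕ)), (x i) ^ 2) ∂μ =
      (μ Set.univ).toReal) :
    μ {x : EuclideanSpace ℝ (Fin (m + 2)) | x 0 ≠ 0} = 0 := by
  rcases eq_or_ne (μ Set.univ).toReal 0 with hμ | hμ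
  · rw [ENNReal.toReal_eq_zero_iff, Measure.measure_univ_eq_zero] at hμ
    simp [hμ.resolve_right (measure_ne_top μ _)]
  -- a nonzero value of the integral rules out the junk value of a non-integrable integrand
  have hint_integrable : ∀ s > 0, Integrable (fun x : EuclideanSpace ℝ (Fin (m + 2)) =>
      Real.sqrt (s ^ 2 * (x 0) ^ 2 + (s ^ 2)⁻¹ * (x 1) ^ 2 +
        ∑ i ∈ Finset.univ.filter (fun i : Fin (m + 2) => 2 ≤ (i : ℕ)), (x i) ^ 2)) μ :=
    fun s hs => .of_integral_ne_zero ((hint s hs).trans_ne hμ)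
  have hzero : (fun x : EuclideanSpace ℝ (Fin (m + 2)) => |x 0|) =ᵐ[μ] 0 := by
    refine ae_eq_zero_of_forall_pos_mul_le (by fun_prop) (fun x => abs_nonneg _)
      hint_integrable (fun s hs x => ?_) (fun s hs => (hint s hs).le)
    rw [Real.le_sqrt (by positivity) (by positivity), mul_pow, sq_abs]
    exact le_add_of_le_of_nonneg (le_add_of_nonneg_right (by positivity)) (by positivity)
  simpa [Filter.EventuallyEq, ae_iff] using hzero

theorem stmt_8 (m : ℕ) (μ : Measure (EuclideanSpace ℝ (Fin (m + 2))))
    [IsFiniteMeasure μ]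
    (hsph : μ (Metric.sphere (0 : EuclideanSpace ℝ (Fin (m + 2))) 1)ᶜ = 0)
    (hint : ∀ s : ℝ, 0 < s →
      ∫ x, Real.sqrt (s ^ 2 * (x 0) ^ 2 + (s ^ 2)⁻¹ * (x 1) ^ 2 +
        ∑ i ∈ Finset.univ.filter (fun i : Fin (m + 2) => 2 ≤ (i : ℕ)), (x i) ^ 2) ∂μ =
      (μ Set.univ).toReal) :
    μ {x : EuclideanSpace ℝ (Fin (m + 2)) | x 0 ≠ 0} = 0 :=
  stmt_8_general m μ hint
end

section
/- Let p ≤ 0 and let μ be a finite positive Borel measure on S^{n-1} ⊂ ℝⁿ (n ≥ 2) such that for all s > 0, μ(S^{n-1}) = s · ∫_{S^{n-1}} (x₁²/s² + x₂² + ⋯ + x_n²)^{p/2} dμ(x). Then μ = 0. -/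
/-!
On the unit sphere the integrand is `(1 + x₀² (1/s² - 1)) ^ (p/2) ≥ (1 + 1/s²) ^ (p/2)` because
`p ≤ 0`, so the hypothesis gives `μ(S) ≥ s (1 + 1/s²) ^ (p/2) · μ(S)`. By Bernoulli's inequality
for a nonpositive exponent the factor `s (1 + 1/s²) ^ (p/2)` exceeds `1` once `s = 2 - p`,
which forces `μ(S) = 0`.
-/

open MeasureTheory Finset

theorem Real.one_add_mul_le_rpow_one_add_of_nonpos {t a : ℝ} (ht : -1 < t) (ha : a ≤ 0) :
    1 + a * t ≤ (1 + t) ^ a := by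
  have hpos : 0 < 1 + t := by linarith
  have hlog : Real.log (1 + t) ≤ t := by linarith [Real.log_le_sub_one_of_pos hpos]
  calc 1 + a * t ≤ 1 + a * Real.log (1 + t) := by linarith [mul_le_mul_of_nonpos_left hlog ha]
    _ ≤ Real.exp (a * Real.log (1 + t)) := by linarith [Real.add_one_le_exp (a * Real.log (1 + t))]
    _ = (1 + t) ^ a := by rw [Real.rpow_def_of_pos hpos, mul_comm]

theorem one_lt_mul_one_add_inv_sq_rpow {p : ℝ} (hp : p ≤ 0) :
    1 < (2 - p) * (1 + 1 / (2 - p) ^ 2) ^ (p / 2) := by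
  set s := 2 - p with hs
  have hs2 : 2 ≤ s := by linarith
  have hbern : 1 + p / 2 * (1 / s ^ 2) ≤ (1 + 1 / s ^ 2) ^ (p / 2) :=
    Real.one_add_mul_le_rpow_one_add_of_nonpos
      (by linarith [one_div_pos.2 (by positivity : (0 : ℝ) < s ^ 2)]) (by linarith)
  have hlin : 1 < s * (1 + p / 2 * (1 / s ^ 2)) := by
    have hexpand : s * (1 + p / 2 * (1 / s ^ 2)) = s + p / (2 * s) := by field_simp
    have hfrac : p / (2 * s) = 1 / s - 1 / 2 := by field_simp; linarith
    have hinv : 0 < 1 / s := by positivity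
    linarith
  exact hlin.trans_le (mul_le_mul_of_nonneg_left hbern (by positivity))

theorem EuclideanSpace.sum_erase_sq {ι : Type*} [Fintype ι] [DecidableEq ι]
    (x : EuclideanSpace ℝ ι) (i₀ : ι) :
    ∑ i ∈ univ.erase i₀, x i ^ 2 = ‖x‖ ^ 2 - x i₀ ^ 2 := by
  rw [EuclideanSpace.real_norm_sq_eq, ← Finset.sum_erase_add _ _ (mem_univ i₀)]
  ring

theorem one_add_inv_sq_rpow_le_of_norm_eq_one {ι : Type*} [Fintype ι] [DecidableEq ι]
    {x : EuclideanSpace ℝ ι} (hx : ‖x‖ = 1) (i₀ : ι) {s p : ℝ} (hs : 0 < s) (hp : p ≤ 0) :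
    (1 + 1 / s ^ 2) ^ (p / 2) ≤ (x i₀ ^ 2 / s ^ 2 + ∑ i ∈ univ.erase i₀, x i ^ 2) ^ (p / 2) := by
  have hrest := EuclideanSpace.sum_erase_sq x i₀
  rw [hx, one_pow] at hrest
  have hx0 : x i₀ ^ 2 ≤ 1 := by
    linarith [hrest ▸ Finset.sum_nonneg fun i _ => sq_nonneg (x i)]
  have hu : 0 < 1 / s ^ 2 := by positivity
  have hdiv : x i₀ ^ 2 / s ^ 2 = x i₀ ^ 2 * (1 / s ^ 2) := by ring
  rw [hrest, hdiv]
  apply Real.rpow_le_rpow_of_nonpos _ _ (by linarith)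
  · nlinarith [sq_nonneg (x i₀), mul_nonneg (sq_nonneg (x i₀)) hu.le]
  · nlinarith [sq_nonneg (x i₀)]

theorem measure_eq_zero_of_measureReal_univ_eq_mul_integral {α : Type*} [MeasurableSpace α]
    {μ : Measure α} [IsFiniteMeasure μ] {f : α → ℝ} {c s : ℝ} (hs : 0 ≤ s)
    (hf : ∀ᵐ x ∂μ, c ≤ f x) (hsc : 1 < s * c) (h : μ.real Set.univ = s * ∫ x, f x ∂μ) :
    μ = 0 := by
  suffices μ.real Set.univ = 0 by
    rwa [measureReal_eq_zero_iff, Measure.measure_univ_eq_zero] at this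
  by_cases hfi : Integrable f μ
  · have hmono : c * μ.real Set.univ ≤ ∫ x, f x ∂μ := by
      simpa [mul_comm] using integral_mono_ae (integrable_const c) hfi hf
    nlinarith [mul_le_mul_of_nonneg_left hmono hs, measureReal_nonneg (μ := μ) (s := Set.univ)]
  · -- the Bochner integral of a non-integrable function is `0`
    rwa [integral_undef hfi, mul_zero] at h

theorem Fin.filter_one_le_eq_erase_zero (n : ℕ) :
    univ.filter (fun i : Fin (n + 1) => 1 ≤ (i : ℕ)) = univ.erase 0 := by
  ext i
  simp only [mem_filter, mem_univ, true_and, mem_erase, and_true, Nat.one_le_iff_ne_zero, ne_eq,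
    Fin.val_eq_zero_iff]

theorem stmt_9 (m : ℕ) (p : ℝ) (hp : p ≤ 0)
    (μ : Measure (EuclideanSpace ℝ (Fin (m + 2)))) [IsFiniteMeasure μ]
    (hsph : μ (Metric.sphere (0 : EuclideanSpace ℝ (Fin (m + 2))) 1)ᶜ = 0)
    (hint : ∀ s : ℝ, 0 < s →
      (μ Set.univ).toReal =
        s * ∫ x, ((x 0) ^ 2 / s ^ 2 +
          ∑ i ∈ Finset.univ.filter (fun i : Fin (m + 2) => 1 ≤ (i : ℕ)), (x i) ^ 2) ^ (p / 2) ∂μ) :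
    μ = 0 := by
  have hs : 0 < 2 - p := by linarith
  have hμ := hint (2 - p) hs
  rw [Fin.filter_one_le_eq_erase_zero, ← measureReal_def] at hμ
  refine measure_eq_zero_of_measureReal_univ_eq_mul_integral hs.le ?_
    (one_lt_mul_one_add_inv_sq_rpow hp) hμ
  filter_upwards [mem_ae_iff.2 hsph] with x hx
  exact one_add_inv_sq_rpow_le_of_norm_eq_one (mem_sphere_zero_iff_norm.1 hx) 0 hs hp
end

section
/- Let n ≥ 3, p < 0, and define φ_λ ∈ SL(n,ℝ) by φ_λe₁ = e₁, φ_λe₂ = (1−λ)e₁ + λe₂, φ_λe_k = e_k for k ≥ 3. With f_p(x) = ((x₁−x₂)² + x₂² + ⋯ + x_n²)^{p/2}, for every x ∈ S^{n-1} one has lim_{λ→0⁺} f_p(φ_λ^{-t} x) = 𝟙_{{x₁ = x₂}}(x) · f_p(x), and the family (λ,x) ↦ f_p(φ_λ^{-t}x) is uniformly bounded on (0,1) × S^{n-1}. -/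
/-!
Write `a = x₁`, `b = x₂`, `s = x₃² + ⋯ + x_n²` and `u = (a - b)/λ`, so that the base of
`f_p(φ_λ^{-t} x)` is `u² + (a - u)² + s`. If `a = b` it does not depend on `λ` and equals the
base of `f_p(x)`; otherwise `u² → ∞` as `λ → 0⁺`, and the negative power tends to `0`.
For boundedness, `u² ≥ (a - b)²` when `λ ≤ 1` and `u² + (a - u)² ≥ a²/2`, which together bound
`a² + b² + s = 1` by eight times the base; since `p ≤ 0`, `f_p(φ_λ^{-t} x) ≤ 8^{-p/2}`.
-/

open Set Filter

/-- `f_p(x) = ((x₁−x₂)² + x₂² + ⋯ + x_n²)^{p/2}`. -/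
noncomputable def fp {m : ℕ} (p : ℝ) (x : EuclideanSpace ℝ (Fin (m + 3))) : ℝ :=
  ((x 0 - x 1) ^ 2 + (x 1) ^ 2 +
    ∑ i ∈ Finset.univ.filter (fun i : Fin (m + 3) => 2 ≤ (i : ℕ)), (x i) ^ 2) ^ (p / 2)

/-- `f_p(φ_λ^{-t} x) = (((x₁−x₂)/λ)² + (x₁ + (x₂−x₁)/λ)² + x₃² + ⋯ + x_n²)^{p/2}`. -/
noncomputable def fpPhi {m : ℕ} (p l : ℝ) (x : EuclideanSpace ℝ (Fin (m + 3))) : ℝ :=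
  (((x 0 - x 1) / l) ^ 2 + (x 0 + (x 1 - x 0) / l) ^ 2 +
    ∑ i ∈ Finset.univ.filter (fun i : Fin (m + 3) => 2 ≤ (i : ℕ)), (x i) ^ 2) ^ (p / 2)

open Topology

lemma sq_add_sq_add_sum_filter_eq_norm_sq {m : ℕ} (x : EuclideanSpace ℝ (Fin (m + 3))) :
    x 0 ^ 2 + x 1 ^ 2 + ∑ i ∈ Finset.univ.filter (fun i : Fin (m + 3) => 2 ≤ (i : ℕ)), x i ^ 2
      = ‖x‖ ^ 2 := by
  simp [EuclideanSpace.norm_sq_eq, Finset.sum_filter, Fin.sum_univ_succ, add_assoc]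

lemma fpPhi_eq_fp_of_eq {m : ℕ} (p l : ℝ) {x : EuclideanSpace ℝ (Fin (m + 3))}
    (h : x 0 = x 1) : fpPhi p l x = fp p x := by
  simp [fpPhi, fp, h]

lemma tendsto_div_sq_add_sq_add_atTop {a b : ℝ} (s : ℝ) (hs : 0 ≤ s) (hab : a ≠ b) :
    Tendsto (fun l : ℝ => ((a - b) / l) ^ 2 + (a + (b - a) / l) ^ 2 + s) (𝓝[>] 0) atTop := by
  have hinv : Tendsto (fun l : ℝ => (l⁻¹) ^ 2 * (a - b) ^ 2) (𝓝[>] 0) atTop :=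
    ((tendsto_pow_atTop two_ne_zero).comp tendsto_inv_nhdsGT_zero).atTop_mul_const
      (sq_pos_of_ne_zero (sub_ne_zero.2 hab))
  refine tendsto_atTop_mono (fun l => ?_) hinv
  have : (l⁻¹) ^ 2 * (a - b) ^ 2 = ((a - b) / l) ^ 2 := by ring
  nlinarith [sq_nonneg (a + (b - a) / l)]

lemma sq_add_sq_add_le_eight_mul {a b s l : ℝ} (hl0 : 0 < l) (hl1 : l ≤ 1) (hs : 0 ≤ s) :
    a ^ 2 + b ^ 2 + s ≤ 8 * (((a - b) / l) ^ 2 + (a + (b - a) / l) ^ 2 + s) := by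
  set u := (a - b) / l
  have hu : u * l = a - b := div_mul_cancel₀ _ hl0.ne'
  have hsecond : a + (b - a) / l = a - u := by rw [← neg_sub, neg_div]; ring
  have hu_ge : (a - b) ^ 2 ≤ u ^ 2 := by
    rw [← hu, mul_pow]
    exact mul_le_of_le_one_right (sq_nonneg u) (pow_le_one₀ hl0.le hl1)
  rw [hsecond]
  nlinarith [sq_nonneg (a - 2 * u), sq_nonneg (a + b)]

theorem tendsto_fpPhi_nhdsGT_zero {m : ℕ} {p : ℝ} (hp : p < 0)
    (x : EuclideanSpace ℝ (Fin (m + 3))) :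
    Tendsto (fun l : ℝ => fpPhi p l x) (𝓝[>] 0)
      (𝓝 (indicator {y : EuclideanSpace ℝ (Fin (m + 3)) | y 0 = y 1} (fp p) x)) := by
  by_cases h : x 0 = x 1
  · rw [indicator_of_mem (show x ∈ {y : EuclideanSpace ℝ (Fin (m + 3)) | y 0 = y 1} from h)]
    simp only [fpPhi_eq_fp_of_eq p _ h]
    exact tendsto_const_nhds
  · rw [indicator_of_notMem (show x ∉ {y : EuclideanSpace ℝ (Fin (m + 3)) | y 0 = y 1} from h)]
    have hpow : Tendsto (fun t : ℝ => t ^ (p / 2)) atTop (𝓝 0) := by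
      simpa using tendsto_rpow_neg_atTop (y := -(p / 2)) (by linarith)
    exact hpow.comp <|
      tendsto_div_sq_add_sq_add_atTop _ (Finset.sum_nonneg fun i _ => sq_nonneg _) h

theorem abs_fpPhi_le {m : ℕ} {p l : ℝ} (hp : p ≤ 0) (hl : l ∈ Ioc 0 1)
    {x : EuclideanSpace ℝ (Fin (m + 3))} (hx : ‖x‖ = 1) :
    |fpPhi p l x| ≤ (1 / 8) ^ (p / 2) := by
  have hs : 0 ≤ ∑ i ∈ Finset.univ.filter (fun i : Fin (m + 3) => 2 ≤ (i : ℕ)), x i ^ 2 :=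
    Finset.sum_nonneg fun i _ => sq_nonneg _
  have hbase := sq_add_sq_add_le_eight_mul (a := x 0) (b := x 1) hl.1 hl.2 hs
  rw [sq_add_sq_add_sum_filter_eq_norm_sq, hx] at hbase
  rw [fpPhi, abs_of_nonneg (Real.rpow_nonneg (by positivity) _)]
  exact Real.rpow_le_rpow_of_nonpos (by norm_num) (by linarith) (by linarith)

theorem stmt_12 (m : ℕ) (p : ℝ) (hp : p < 0) :
    (∀ x ∈ Metric.sphere (0 : EuclideanSpace ℝ (Fin (m + 3))) 1,
      Filter.Tendsto (fun l : ℝ => fpPhi p l x) (nhdsWithin 0 (Set.Ioi 0))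
        (nhds (Set.indicator {y : EuclideanSpace ℝ (Fin (m + 3)) | y 0 = y 1} (fp p) x))) ∧
    ∃ C : ℝ, ∀ l ∈ Set.Ioo (0 : ℝ) 1,
      ∀ x ∈ Metric.sphere (0 : EuclideanSpace ℝ (Fin (m + 3))) 1, |fpPhi p l x| ≤ C :=
  ⟨fun x _ => tendsto_fpPhi_nhdsGT_zero hp x,
    ⟨_, fun _ hl _ hx =>
      abs_fpPhi_le hp.le (Ioo_subset_Ioc_self hl) (mem_sphere_zero_iff_norm.1 hx)⟩⟩
end

section
/- Let n ≥ 3 and let μ be a finite Borel measure on S^{n-1} that is invariant under all coordinate permutations and is supported on the set ⋂{ {x_i = 0} ∪ {x_j = x_k} : 1 ≤ i,j,k ≤ n pairwise distinct }. Then μ is supported on the finite set {±e₁, ..., ±e_n, ±(e₁+⋯+e_n)/√n}. -/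
open MeasureTheory

section ThreeIndexCondition

variable {ι α : Type*} [Zero α]

/-- Two distinct values pin down every other coordinate to `0`; a third index then kills one of
the two. -/
theorem forall_eq_or_exists_forall_ne_eq_zero (hι : 3 ≤ ENat.card ι) (x : ι → α)
    (hx : ∀ i j k, i ≠ j → i ≠ k → j ≠ k → x i = 0 ∨ x j = x k) :
    (∀ i j, x i = x j) ∨ ∃ t, ∀ i, i ≠ t → x i = 0 := by
  refine or_iff_not_imp_left.mpr fun hconst => ?_
  push Not at hconst
  obtain ⟨j, k, hxjk⟩ := hconst
  have hjk : j ≠ k := ne_of_apply_ne x hxjk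
  have hzero : ∀ i, i ≠ j → i ≠ k → x i = 0 := fun i hij hik =>
    (hx i j k hij hik hjk).resolve_right hxjk
  obtain ⟨l, hlj, hlk⟩ := ENat.exists_ne_ne_of_three_le hι j k
  rcases hx j k l hjk hlj.symm hlk.symm with hxj | hxkl
  · refine ⟨k, fun i hik => ?_⟩
    by_cases hij : i = j
    · exact hij ▸ hxj
    · exact hzero i hij hik
  · refine ⟨j, fun i hij => ?_⟩
    by_cases hik : i = k
    · exact hik ▸ hxkl.trans (hzero l hlj hlk)
    · exact hzero i hij hik

end ThreeIndexCondition

section UnitVectors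

variable {ι : Type*} [Fintype ι] [DecidableEq ι]

theorem EuclideanSpace.eq_single_or_eq_neg_single_of_norm_eq_one (x : EuclideanSpace ℝ ι) (t : ι)
    (h0 : ∀ i, i ≠ t → x i = 0) (hx : ‖x‖ = 1) :
    x = EuclideanSpace.single t 1 ∨ x = -EuclideanSpace.single t 1 := by
  have hx_single : x = EuclideanSpace.single t (x t) := by
    ext i
    by_cases hi : i = t
    · simp [hi]
    · simp [hi, h0 i hi]
  have habs : |x t| = 1 := by
    rwa [hx_single, PiLp.norm_single, Real.norm_eq_abs] at hx
  rcases abs_eq zero_le_one |>.mp habs with h | h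
  · exact .inl (by rw [hx_single, h])
  · exact .inr (by rw [hx_single, h]; exact PiLp.single_neg 2 t)

theorem EuclideanSpace.sum_single_one_apply (i : ι) :
    (∑ j, EuclideanSpace.single j (1 : ℝ) : EuclideanSpace ℝ ι) i = 1 := by
  simp [WithLp.ofLp_sum]

theorem EuclideanSpace.norm_sum_single_one :
    ‖(∑ j, EuclideanSpace.single j (1 : ℝ) : EuclideanSpace ℝ ι)‖ = √(Fintype.card ι) := by
  simp [EuclideanSpace.norm_eq, EuclideanSpace.sum_single_one_apply]

theorem EuclideanSpace.eq_smul_sum_single_or_eq_neg_of_norm_eq_one (x : EuclideanSpace ℝ ι)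
    (hconst : ∀ i j, x i = x j) (hx : ‖x‖ = 1) :
    x = (√(Fintype.card ι))⁻¹ • ∑ j, EuclideanSpace.single j 1 ∨
      x = -((√(Fintype.card ι))⁻¹ • ∑ j, EuclideanSpace.single j 1) := by
  have hne : Nonempty ι := by
    by_contra! h
    simp [Subsingleton.elim x 0] at hx
  obtain ⟨i₀⟩ := hne
  have hx_smul : x = x i₀ • ∑ j, EuclideanSpace.single j (1 : ℝ) := by
    ext i
    simp [EuclideanSpace.sum_single_one_apply, hconst i i₀]
  have habs : |x i₀| = (√(Fintype.card ι))⁻¹ := by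
    rw [hx_smul, norm_smul, EuclideanSpace.norm_sum_single_one, Real.norm_eq_abs] at hx
    exact eq_inv_of_mul_eq_one_left hx
  rcases abs_eq (by positivity) |>.mp habs with h | h
  · exact .inl (by rw [hx_smul, h])
  · exact .inr (by rw [hx_smul, h, neg_smul])

end UnitVectors

theorem stmt_13_general (m : ℕ) (μ : Measure (EuclideanSpace ℝ (Fin (m + 3))))
    (hsph : μ (Metric.sphere (0 : EuclideanSpace ℝ (Fin (m + 3))) 1)ᶜ = 0)
    (hsupp : μ (⋂ (i : Fin (m + 3)) (j : Fin (m + 3)) (k : Fin (m + 3))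
      (_ : i ≠ j) (_ : i ≠ k) (_ : j ≠ k),
      ({x : EuclideanSpace ℝ (Fin (m + 3)) | x i = 0} ∪
        {x : EuclideanSpace ℝ (Fin (m + 3)) | x j = x k}))ᶜ = 0) :
    μ ({x : EuclideanSpace ℝ (Fin (m + 3)) |
        (∃ i, x = EuclideanSpace.single i (1 : ℝ) ∨ x = -EuclideanSpace.single i (1 : ℝ)) ∨
        x = (Real.sqrt (m + 3))⁻¹ •
          (∑ i, EuclideanSpace.single i (1 : ℝ) : EuclideanSpace ℝ (Fin (m + 3))) ∨
        x = -((Real.sqrt (m + 3))⁻¹ •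
          (∑ i, EuclideanSpace.single i (1 : ℝ) : EuclideanSpace ℝ (Fin (m + 3))))})ᶜ = 0 := by
  refine measure_mono_null (fun x hx => ?_) (measure_union_null hsph hsupp)
  simp only [Set.mem_union, Set.mem_compl_iff, Set.mem_iInter, Set.mem_ofPred_eq,
    mem_sphere_zero_iff_norm] at hx ⊢
  contrapose! hx
  obtain ⟨hnorm, hcond⟩ := hx
  rcases forall_eq_or_exists_forall_ne_eq_zero (by simp) x hcond with hconst | ⟨t, ht⟩
  · right
    simpa only [Fintype.card_fin, Nat.cast_add, Nat.cast_ofNat] using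
      EuclideanSpace.eq_smul_sum_single_or_eq_neg_of_norm_eq_one x hconst hnorm
  · exact .inl ⟨t, EuclideanSpace.eq_single_or_eq_neg_single_of_norm_eq_one x t ht hnorm⟩

theorem stmt_13 (m : ℕ) (μ : Measure (EuclideanSpace ℝ (Fin (m + 3))))
    [IsFiniteMeasure μ]
    (hsph : μ (Metric.sphere (0 : EuclideanSpace ℝ (Fin (m + 3))) 1)ᶜ = 0)
    (hperm : ∀ σ : Equiv.Perm (Fin (m + 3)),
      Measure.map (fun x : EuclideanSpace ℝ (Fin (m + 3)) => (WithLp.toLp 2 (fun i => x (σ i)) :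
        EuclideanSpace ℝ (Fin (m + 3)))) μ = μ)
    (hsupp : μ (⋂ (i : Fin (m + 3)) (j : Fin (m + 3)) (k : Fin (m + 3))
      (_ : i ≠ j) (_ : i ≠ k) (_ : j ≠ k),
      ({x : EuclideanSpace ℝ (Fin (m + 3)) | x i = 0} ∪
        {x : EuclideanSpace ℝ (Fin (m + 3)) | x j = x k}))ᶜ = 0) :
    μ ({x : EuclideanSpace ℝ (Fin (m + 3)) |
        (∃ i, x = EuclideanSpace.single i (1 : ℝ) ∨ x = -EuclideanSpace.single i (1 : ℝ)) ∨
        x = (Real.sqrt (m + 3))⁻¹ •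
          (∑ i, EuclideanSpace.single i (1 : ℝ) : EuclideanSpace ℝ (Fin (m + 3))) ∨
        x = -((Real.sqrt (m + 3))⁻¹ •
          (∑ i, EuclideanSpace.single i (1 : ℝ) : EuclideanSpace ℝ (Fin (m + 3))))})ᶜ = 0 :=
  stmt_13_general m μ hsph hsupp
end
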